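/- arXiv:2512.05285 — 6 statements merged into one kernel-verified Lean document; each statement's English description precedes it below -/
import Mathlib

section
/- Let F be a nonempty closed subset of ℝⁿ. The squared distance function x ↦ dist(x, F)² is differentiable with locally Lipschitz gradient (i.e. C^{1,1}_loc) if and only if F is convex. -/
/-!
Write `d² = infDist · F ^ 2`. If `F` is convex, every `x` has a nearest point `P x`, characterised
by `⟪x - P x, y - P x⟫ ≤ 0` for `y ∈ F`; hence `x ↦ x - P x` is firmly nonexpansive, `d²` is
squeezed between two quadratics touching at `x`, and `∇ d² = 2 (x - P x)` is `2`-Lipschitz.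

Conversely, where `d²` is differentiable, `y ↦ ‖y - q‖² - d²(y)` is minimal at `x` for every
nearest point `q` of `x`, so `q = x - ½ ∇ d²(x)`: nearest points are unique and depend
continuously on `x`. Let `p` be the nearest point of `z` and `L` a Lipschitz constant of `∇ d²`
near `z`. The quadratic lower bound for `d²` at `z` gives `(1 + L) · 2⟪z - p, q - p⟫ ≤ L ‖q - p‖²`
for `q ∈ F` near `p`, while the nearest point `q` of `p + s (z - p)` satisfies
`‖q - p‖² ≤ 2s ⟪z - p, q - p⟫`; for `s` near `1` the two force `q = p`. By continuous induction `p`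
remains the nearest point along the ray `p + s (z - p)`, `s ≥ 1`, and letting `s → ∞` gives
`⟪z - p, y - p⟫ ≤ 0` for `y ∈ F`. At a convex combination `z` of points of `F` this forces
`‖z - p‖² ≤ 0`, so `z ∈ F`.
-/

open Metric Set Filter InnerProductSpace
open scoped RealInnerProductSpace Topology NNReal

theorem infDist_sq_le_norm_sub_sq {E : Type*} [SeminormedAddCommGroup E] {F : Set E} {q : E}
    (hq : q ∈ F) (x : E) : infDist x F ^ 2 ≤ ‖x - q‖ ^ 2 := by
  rw [← dist_eq_norm]
  exact pow_le_pow_left₀ infDist_nonneg (infDist_le_dist_of_mem hq) 2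

variable {E : Type*} [NormedAddCommGroup E] [InnerProductSpace ℝ E]

def FirmlyNonexpansive (T : E → E) : Prop :=
  ∀ a b, ‖T a - T b‖ ^ 2 ≤ ⟪T a - T b, a - b⟫_ℝ

namespace FirmlyNonexpansive

variable {T : E → E}

theorem inner_nonneg (hT : FirmlyNonexpansive T) (a b : E) : 0 ≤ ⟪T a - T b, a - b⟫_ℝ :=
  (sq_nonneg _).trans (hT a b)

theorem lipschitzWith (hT : FirmlyNonexpansive T) : LipschitzWith 1 T := by
  refine LipschitzWith.of_dist_le_mul fun a b => ?_
  rw [dist_eq_norm, dist_eq_norm, NNReal.coe_one, one_mul]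
  have := (hT a b).trans (real_inner_le_norm _ _)
  nlinarith [norm_nonneg (T a - T b), norm_nonneg (a - b)]

end FirmlyNonexpansive

theorem hasGradientAt_of_abs_sub_inner_le [CompleteSpace E] {f : E → ℝ} {g x : E} {C : ℝ}
    (h : ∀ y, |f y - f x - ⟪g, y - x⟫_ℝ| ≤ C * ‖y - x‖ ^ 2) : HasGradientAt f g x := by
  rw [hasGradientAt_iff_isLittleO]
  refine (Asymptotics.IsBigO.of_bound C (Eventually.of_forall fun y => ?_)).trans_isLittleO
    (Asymptotics.isLittleO_pow_sub_sub x one_lt_two)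
  simpa [Real.norm_eq_abs] using h y

variable {F : Set E}

theorem Convex.real_inner_sub_le_zero_of_infDist_eq_dist (hF : Convex ℝ F) {x p y : E}
    (hp : p ∈ F) (hd : infDist x F = dist x p) (hy : y ∈ F) : ⟪x - p, y - p⟫_ℝ ≤ 0 := by
  refine (norm_eq_iInf_iff_real_inner_le_zero hF hp).1 ?_ y hy
  simpa [infDist_eq_iInf, dist_eq_norm] using hd.symm

section NearestPoint

variable {P : E → E} (hPF : ∀ x, P x ∈ F) (hPd : ∀ x, infDist x F = dist x (P x))
include hPF

theorem firmlyNonexpansive_sub_of_forall_inner_le_zero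
    (hvar : ∀ x, ∀ y ∈ F, ⟪x - P x, y - P x⟫_ℝ ≤ 0) : FirmlyNonexpansive fun x => x - P x := by
  intro a b
  have ha := hvar a (P b) (hPF b)
  have hb := hvar b (P a) (hPF a)
  have hsplit : a - b = ((a - P a) - (b - P b)) + (P a - P b) := by abel
  rw [hsplit, inner_add_right, real_inner_self_eq_norm_sq]
  have : ⟪(a - P a) - (b - P b), P a - P b⟫_ℝ =
      -⟪a - P a, P b - P a⟫_ℝ - ⟪b - P b, P a - P b⟫_ℝ := by
    rw [inner_sub_left, ← neg_sub (P a) (P b), inner_neg_right]; ring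
  linarith

include hPd in
theorem hasGradientAt_infDist_sq [CompleteSpace E] (hT : FirmlyNonexpansive fun x => x - P x)
    (x : E) : HasGradientAt (fun x => infDist x F ^ 2) ((2 : ℝ) • (x - P x)) x := by
  have hfx : infDist x F ^ 2 = ‖x - P x‖ ^ 2 := by rw [hPd x, dist_eq_norm]
  refine hasGradientAt_of_abs_sub_inner_le (C := 1) fun y => ?_
  rw [real_inner_smul_left, one_mul, abs_le]
  constructor
  · have hx := infDist_sq_le_norm_sub_sq (hPF y) x
    have hmono := hT.inner_nonneg y x
    rw [show x - P y = (y - P y) - (y - x) by abel, norm_sub_sq_real] at hx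
    rw [inner_sub_left] at hmono
    rw [hPd y, dist_eq_norm]
    linarith
  · have hy := infDist_sq_le_norm_sub_sq (hPF x) y
    rw [show y - P x = (x - P x) + (y - x) by abel, norm_add_sq_real, ← hfx] at hy
    linarith

end NearestPoint

theorem Convex.differentiable_infDist_sq_and_lipschitzWith_gradient [ProperSpace E]
    (hF : Convex ℝ F) (hne : F.Nonempty) (hcl : IsClosed F) :
    Differentiable ℝ (fun x => infDist x F ^ 2) ∧
      LipschitzWith 2 (gradient fun x => infDist x F ^ 2) := by
  choose P hPF hPd using fun x => hcl.exists_infDist_eq_dist hne x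
  have hT := firmlyNonexpansive_sub_of_forall_inner_le_zero hPF
    fun x _ hy => hF.real_inner_sub_le_zero_of_infDist_eq_dist (hPF x) (hPd x) hy
  have hgrad := hasGradientAt_infDist_sq hPF hPd hT
  refine ⟨fun x => (hgrad x).differentiableAt, ?_⟩
  have h2 : ‖(2 : ℝ)‖₊ * 1 = 2 := by simp
  rw [funext fun x => (hgrad x).gradient]
  exact h2 ▸ (lipschitzWith_smul (2 : ℝ)).comp hT.lipschitzWith

theorem gradient_infDist_sq_eq_of_infDist_eq_dist [CompleteSpace E] {x q : E}
    (hx : DifferentiableAt ℝ (fun x => infDist x F ^ 2) x) (hq : q ∈ F)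
    (hd : infDist x F = dist x q) :
    gradient (fun x => infDist x F ^ 2) x = (2 : ℝ) • (x - q) := by
  have hmin : IsLocalMin (fun y => ‖y - q‖ ^ 2 - infDist y F ^ 2) x :=
    IsMinOn.isLocalMin (s := univ) (fun y _ => by
      simpa [hd, dist_eq_norm] using infDist_sq_le_norm_sub_sq hq y) univ_mem
  have hderiv := hmin.hasFDerivAt_eq_zero
    (((hasFDerivAt_sub_const q).norm_sq).sub hx.hasGradientAt.hasFDerivAt)
  refine ext_inner_right ℝ fun e => ?_
  have := congrArg (· e) hderiv
  simp only [sub_apply, smul_apply, ContinuousLinearMap.comp_apply, ContinuousLinearMap.id_apply,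
    innerSL_apply_apply, toDual_apply_apply, zero_apply, nsmul_eq_mul, Nat.cast_ofNat] at this
  rw [real_inner_smul_left]
  linarith

theorem Convex.abs_sub_sub_inner_gradient_le [CompleteSpace E] {f : E → ℝ} {s : Set E}
    {L : ℝ≥0} (hs : Convex ℝ s) (hf : ∀ y ∈ s, DifferentiableAt ℝ f y)
    (hL : LipschitzOnWith L (gradient f) s) {z m : E} (hz : z ∈ s) (hm : m ∈ s) :
    |f m - f z - ⟪gradient f z, m - z⟫_ℝ| ≤ L * ‖m - z‖ ^ 2 := by
  have hmz : m ∈ s ∩ closedBall z ‖m - z‖ := ⟨hm, by rw [mem_closedBall, dist_eq_norm]⟩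
  have hzz : z ∈ s ∩ closedBall z ‖m - z‖ := ⟨hz, mem_closedBall_self (norm_nonneg _)⟩
  have hbound : ∀ y ∈ s ∩ closedBall z ‖m - z‖,
      ‖toDual ℝ E (gradient f y) - toDual ℝ E (gradient f z)‖ ≤ L * ‖m - z‖ := by
    rintro y ⟨hy, hyz⟩
    rw [← map_sub, LinearIsometryEquiv.norm_map, ← dist_eq_norm]
    exact (hL.dist_le_mul y hy z hz).trans (by gcongr; exact mem_closedBall.1 hyz)
  have := (hs.inter (convex_closedBall z _)).norm_image_sub_le_of_norm_hasFDerivWithin_le'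
    (fun y hy => (hf y hy.1).hasGradientAt.hasFDerivAt.hasFDerivWithinAt) hbound hzz hmz
  rw [toDual_apply_apply, Real.norm_eq_abs] at this
  linarith

theorem two_mul_inner_le_of_lipschitzOnWith_gradient [CompleteSpace E] {s : Set E} {L : ℝ≥0}
    (hs : Convex ℝ s) (hdiff : ∀ y ∈ s, DifferentiableAt ℝ (fun x => infDist x F ^ 2) y)
    (hL : LipschitzOnWith L (gradient fun x => infDist x F ^ 2) s) {z p q : E} (hz : z ∈ s)
    (hm : z + (1 + (L : ℝ))⁻¹ • (q - p) ∈ s) (hp : p ∈ F) (hd : infDist z F = dist z p)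
    (hq : q ∈ F) : (1 + L) * (2 * ⟪z - p, q - p⟫_ℝ) ≤ L * ‖q - p‖ ^ 2 := by
  -- `τ = 1 / (1 + L)` minimises the coefficient `(1 - τ) ^ 2 + L * τ ^ 2` appearing in `key`.
  set τ : ℝ := (1 + (L : ℝ))⁻¹
  set m := z + τ • (q - p)
  have hτ : (1 + (L : ℝ)) * τ = 1 := mul_inv_cancel₀ (by positivity)
  have hlower := (abs_le.1 (hs.abs_sub_sub_inner_gradient_le hdiff hL hz hm)).1
  have hupper := infDist_sq_le_norm_sub_sq hq m
  rw [gradient_infDist_sq_eq_of_infDist_eq_dist (hdiff z hz) hp hd, hd, dist_eq_norm] at hlower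
  rw [show m - z = τ • (q - p) by simp [m], norm_smul, real_inner_smul_left,
    real_inner_smul_right, Real.norm_eq_abs, abs_of_pos (by positivity : 0 < τ)] at hlower
  rw [show m - q = (z - p) - (1 - τ) • (q - p) by simp only [m]; module, norm_sub_sq_real,
    real_inner_smul_right, norm_smul, Real.norm_eq_abs, mul_pow, sq_abs] at hupper
  have key : 2 * ⟪z - p, q - p⟫_ℝ ≤ L * τ * ‖q - p‖ ^ 2 :=
    calc 2 * ⟪z - p, q - p⟫_ℝ ≤ (L * τ ^ 2 + (1 - τ) ^ 2) * ‖q - p‖ ^ 2 := by linarith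
      _ = (L * τ ^ 2 + (L * τ) ^ 2) * ‖q - p‖ ^ 2 := by rw [show 1 - τ = L * τ by linarith]
      _ = L * τ * ((1 + L) * τ) * ‖q - p‖ ^ 2 := by ring
      _ = L * τ * ‖q - p‖ ^ 2 := by rw [hτ, mul_one]
  calc (1 + L) * (2 * ⟪z - p, q - p⟫_ℝ) ≤ (1 + L) * (L * τ * ‖q - p‖ ^ 2) := by gcongr
    _ = L * ((1 + L) * τ) * ‖q - p‖ ^ 2 := by ring
    _ = L * ‖q - p‖ ^ 2 := by rw [hτ, mul_one]

theorem eventually_infDist_eq_dist_ray [ProperSpace E] (hne : F.Nonempty) (hcl : IsClosed F)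
    (hdiff : Differentiable ℝ fun x => infDist x F ^ 2)
    (hlip : LocallyLipschitz (gradient fun x => infDist x F ^ 2)) {z p : E} (hp : p ∈ F)
    (hd : infDist z F = dist z p) :
    ∀ᶠ s in 𝓝 (1 : ℝ), infDist (p + s • (z - p)) F = dist (p + s • (z - p)) p := by
  set f : E → ℝ := fun x => infDist x F ^ 2
  obtain ⟨L, U, hU, hL⟩ := hlip z
  obtain ⟨ε, hε, hball⟩ := Metric.mem_nhds_iff.1 hU
  set y : ℝ → E := fun s => p + s • (z - p)
  have hy : Tendsto y (𝓝 1) (𝓝 z) := by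
    convert (Continuous.tendsto (by fun_prop) 1 : Tendsto y _ _) using 2
    simp [y]
  choose q hqF hqd using fun s => hcl.exists_infDist_eq_dist hne (y s)
  have hq : q = fun s => y s - (2 : ℝ)⁻¹ • gradient f (y s) := by
    ext1 s
    rw [gradient_infDist_sq_eq_of_infDist_eq_dist (hdiff _) (hqF s) (hqd s)]
    module
  have hpz : p = z - (2 : ℝ)⁻¹ • gradient f z := by
    rw [gradient_infDist_sq_eq_of_infDist_eq_dist (hdiff z) hp hd]
    module
  have hq1 : Tendsto q (𝓝 1) (𝓝 p) := by
    rw [hq, hpz]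
    exact hy.sub (((hL.continuousOn.continuousAt hU).tendsto.comp hy).const_smul _)
  have hm : Tendsto (fun s => z + (1 + (L : ℝ))⁻¹ • (q s - p)) (𝓝 1) (𝓝 z) := by
    simpa using tendsto_const_nhds.add ((hq1.sub_const p).const_smul ((1 + (L : ℝ))⁻¹))
  have hs : ∀ᶠ s in 𝓝 (1 : ℝ), 0 < s ∧ s * L < 1 + (L : ℝ) :=
    (eventually_gt_nhds one_pos).and (((continuous_mul_const (L : ℝ)).tendsto 1).eventually
      (eventually_lt_nhds (by linarith)))
  filter_upwards [hm (ball_mem_nhds z hε), hs] with s hms ⟨hs0, hsL⟩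
  have hprox := two_mul_inner_le_of_lipschitzOnWith_gradient (convex_ball z ε)
    (fun x _ => hdiff x) (hL.mono hball) (mem_ball_self hε) hms hp hd (hqF s)
  have hnear : ‖q s - p‖ ^ 2 ≤ s * (2 * ⟪z - p, q s - p⟫_ℝ) := by
    have := infDist_sq_le_norm_sub_sq hp (y s)
    rw [hqd s, dist_eq_norm, show y s - q s = s • (z - p) - (q s - p) by simp [y]; abel,
      show y s - p = s • (z - p) by simp [y], norm_sub_sq_real, real_inner_smul_left] at this
    linarith
  have hshrink : (1 + L) * ‖q s - p‖ ^ 2 ≤ s * L * ‖q s - p‖ ^ 2 := by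
    nlinarith [mul_le_mul_of_nonneg_left hprox hs0.le]
  have hv : ‖q s - p‖ ^ 2 ≤ 0 := by nlinarith
  have hqp : q s = p := by simpa [sub_eq_zero] using le_antisymm hv (sq_nonneg _)
  have := hqd s
  rwa [hqp] at this

theorem infDist_eq_dist_ray_of_one_le [ProperSpace E] (hne : F.Nonempty) (hcl : IsClosed F)
    (hdiff : Differentiable ℝ fun x => infDist x F ^ 2)
    (hlip : LocallyLipschitz (gradient fun x => infDist x F ^ 2)) {z p : E} (hp : p ∈ F)
    (hd : infDist z F = dist z p) {t : ℝ} (ht : 1 ≤ t) :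
    infDist (p + t • (z - p)) F = dist (p + t • (z - p)) p := by
  set A := {s : ℝ | infDist (p + s • (z - p)) F = dist (p + s • (z - p)) p}
  have hA : IsClosed A := isClosed_eq (by fun_prop) (by fun_prop)
  refine (hA.inter isClosed_Icc).Icc_subset_of_forall_mem_nhdsWithin
    (by rwa [mem_ofPred_eq, one_smul, add_sub_cancel])
    (fun s ⟨hs, hs1, _⟩ => mem_nhdsWithin_of_mem_nhds ?_) ⟨ht, le_rfl⟩
  have hs0 : s ≠ 0 := (zero_lt_one.trans_le hs1).ne'
  have hscale : Tendsto (fun u => u / s) (𝓝 s) (𝓝 1) := by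
    simpa [hs0] using (continuous_id.div_const s).tendsto s
  filter_upwards [hscale.eventually (eventually_infDist_eq_dist_ray hne hcl hdiff hlip hp hs)]
    with u hu
  rwa [add_sub_cancel_left, smul_smul, div_mul_cancel₀ u hs0] at hu

theorem real_inner_sub_le_zero_of_forall_infDist_eq_dist_ray {x p y : E}
    (hray : ∀ t ≥ (1 : ℝ), infDist (p + t • (x - p)) F = dist (p + t • (x - p)) p)
    (hy : y ∈ F) : ⟪x - p, y - p⟫_ℝ ≤ 0 := by
  by_contra! hpos
  set t := 1 + ‖y - p‖ ^ 2 / (2 * ⟪x - p, y - p⟫_ℝ)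
  have ht : 1 ≤ t := le_add_of_nonneg_right (by positivity)
  have h := infDist_sq_le_norm_sub_sq hy (p + t • (x - p))
  rw [hray t ht, dist_eq_norm, add_sub_cancel_left,
    show p + t • (x - p) - y = t • (x - p) - (y - p) by abel, norm_sub_sq_real,
    real_inner_smul_left] at h
  have : 2 * t * ⟪x - p, y - p⟫_ℝ = 2 * ⟪x - p, y - p⟫_ℝ + ‖y - p‖ ^ 2 := by
    simp only [t]
    field_simp
  linarith

theorem convex_of_forall_exists_real_inner_le_zero
    (h : ∀ x, ∃ p ∈ F, ∀ y ∈ F, ⟪x - p, y - p⟫_ℝ ≤ 0) : Convex ℝ F := by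
  intro a ha b hb α β hα hβ hαβ
  obtain ⟨p, hp, hvar⟩ := h (α • a + β • b)
  have hc : α • a + β • b - p = α • (a - p) + β • (b - p) :=
    calc α • a + β • b - p = α • a + β • b - (α + β) • p := by rw [hαβ, one_smul]
      _ = α • (a - p) + β • (b - p) := by module
  have hnorm : ‖α • a + β • b - p‖ ^ 2 ≤ 0 := by
    rw [← real_inner_self_eq_norm_sq]
    nth_rewrite 2 [hc]
    rw [inner_add_right, real_inner_smul_right, real_inner_smul_right]
    nlinarith [hvar a ha, hvar b hb]
  have : α • a + β • b = p := by simpa [sub_eq_zero] using le_antisymm hnorm (sq_nonneg _)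
  exact this ▸ hp

theorem convex_of_differentiable_of_locallyLipschitz_gradient [ProperSpace E] (hne : F.Nonempty)
    (hcl : IsClosed F) (hdiff : Differentiable ℝ fun x => infDist x F ^ 2)
    (hlip : LocallyLipschitz (gradient fun x => infDist x F ^ 2)) : Convex ℝ F := by
  refine convex_of_forall_exists_real_inner_le_zero fun x => ?_
  obtain ⟨p, hp, hd⟩ := hcl.exists_infDist_eq_dist hne x
  exact ⟨p, hp, fun y => real_inner_sub_le_zero_of_forall_infDist_eq_dist_ray
    fun t ht => infDist_eq_dist_ray_of_one_le hne hcl hdiff hlip hp hd ht⟩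

/-- For a nonempty closed set `F ⊆ ℝⁿ`, the squared distance function
`x ↦ dist(x, F)²` is differentiable with locally Lipschitz gradient if and only if `F`
is convex. -/
theorem sqDist_C1_1_iff_convex (n : ℕ) (F : Set (EuclideanSpace ℝ (Fin n)))
    (hne : F.Nonempty) (hcl : IsClosed F) :
    (Differentiable ℝ (fun x => Metric.infDist x F ^ 2) ∧
      ∀ K : Set (EuclideanSpace ℝ (Fin n)), IsCompact K →
        ∃ L : NNReal, LipschitzOnWith L (gradient (fun x => Metric.infDist x F ^ 2)) K) ↔
    Convex ℝ F := by
  refine ⟨fun ⟨hdiff, hlip⟩ => ?_, fun hF => ?_⟩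
  · refine convex_of_differentiable_of_locallyLipschitz_gradient hne hcl hdiff fun x => ?_
    obtain ⟨L, hL⟩ := hlip _ (isCompact_closedBall x 1)
    exact ⟨L, closedBall x 1, closedBall_mem_nhds x one_pos, hL⟩
  · obtain ⟨hdiff, hlip⟩ := hF.differentiable_infDist_sq_and_lipschitzWith_gradient hne hcl
    exact ⟨hdiff, fun K _ => ⟨2, hlip.lipschitzOnWith⟩⟩
end

section
/- Let f : ℝⁿ → ℝ be a nonnegative differentiable function with locally Lipschitz gradient and inf f = 0, satisfying ‖∇f(x)‖² ≥ f(x) for all x ∈ ℝⁿ. Let y : [0,∞) → ℝⁿ be a solution of y'(t) = −∇f(y(t)) with y(0) = y₀. Then the total length of the trajectory satisfies ∫₀^∞ ‖y'(t)‖ dt ≤ 2·√(f(y₀)). -/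
/-!
Along the flow, `d/dt f(y) = -‖∇f(y)‖²`, so `d/dt (-2√f(y)) = ‖∇f(y)‖² / √f(y) ≥ ‖∇f(y)‖ = ‖y'‖`
by `‖∇f‖² ≥ f`. Integrating gives `∫₀ᵀ ‖y'‖ ≤ 2√f(y₀) - 2√f(y(T)) ≤ 2√f(y₀)` for every `T`.
Since `√f` need not be differentiable where `f` vanishes, the argument is run with `√(f + v²)`,
at the cost of an error `v/2` in the integrand, and then `v → 0`.
-/

open MeasureTheory Set Filter Topology

lemma le_sq_div_sqrt_add_sq_add_half {u v c : ℝ} (hv : 0 < v) (hc : 0 ≤ c)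
    (hcu : c ≤ u ^ 2) : u ≤ u ^ 2 / √(c + v ^ 2) + v / 2 := by
  have hs : 0 < √(c + v ^ 2) := Real.sqrt_pos.2 (by positivity)
  have hs2 : √(c + v ^ 2) ^ 2 = c + v ^ 2 := Real.sq_sqrt (by positivity)
  have hvs : v ≤ √(c + v ^ 2) := Real.le_sqrt_of_sq_le (by linarith)
  rw [← sub_le_iff_le_add, le_div_iff₀ hs]
  nlinarith [sq_nonneg (u - √(c + v ^ 2))]

section GradientFlow

variable {E : Type*} [NormedAddCommGroup E] [InnerProductSpace ℝ E] [CompleteSpace E]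
  {f : E → ℝ} {y : ℝ → E}

theorem hasDerivAt_comp_of_hasDerivAt_neg_gradient {t : ℝ} (hf : DifferentiableAt ℝ f (y t))
    (hy : HasDerivAt y (-gradient f (y t)) t) :
    HasDerivAt (fun s => f (y s)) (-‖gradient f (y t)‖ ^ 2) t := by
  have := hf.hasGradientAt.hasFDerivAt.comp_hasDerivAt t hy
  rwa [InnerProductSpace.toDual_apply_apply, inner_neg_right, real_inner_self_eq_norm_sq] at this

theorem hasDerivAt_neg_two_sqrt_add_sq_of_hasDerivAt_neg_gradient {t v : ℝ}
    (hf : DifferentiableAt ℝ f (y t)) (hy : HasDerivAt y (-gradient f (y t)) t)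
    (hpos : 0 < f (y t) + v ^ 2) :
    HasDerivAt (fun s => -2 * √(f (y s) + v ^ 2))
      (‖gradient f (y t)‖ ^ 2 / √(f (y t) + v ^ 2)) t := by
  have := Real.sqrt_pos.2 hpos
  refine ((((hasDerivAt_comp_of_hasDerivAt_neg_gradient hf hy).add_const (v ^ 2)).sqrt
    hpos.ne').const_mul (-2)).congr_deriv ?_
  field_simp

variable (hpos : ∀ x, 0 ≤ f x) (hdiff : Differentiable ℝ f)
  (hPL : ∀ x, f x ≤ ‖gradient f x‖ ^ 2) (hflow : ∀ t, 0 ≤ t → HasDerivAt y (-gradient f (y t)) t)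
include hpos hdiff hPL hflow

theorem intervalIntegral_norm_deriv_le_two_sqrt_add_sq {T v : ℝ} (hT : 0 ≤ T) (hv : 0 < v)
    (hint : IntervalIntegrable (fun t => ‖deriv y t‖) volume 0 T) :
    ∫ t in 0..T, ‖deriv y t‖ ≤ 2 * √(f (y 0) + v ^ 2) + T * (v / 2) := by
  have hpos' : ∀ s, 0 < f (y s) + v ^ 2 := fun s => by have := hpos (y s); positivity
  have hcont : ContinuousOn (fun s => -2 * √(f (y s) + v ^ 2)) (Icc 0 T) := fun s hs =>
    (hasDerivAt_neg_two_sqrt_add_sq_of_hasDerivAt_neg_gradient (hdiff _) (hflow s hs.1)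
      (hpos' s)).continuousAt.continuousWithinAt
  have hφ : IntegrableOn (fun t => ‖deriv y t‖ - v / 2) (Icc 0 T) :=
    (intervalIntegrable_iff_integrableOn_Icc_of_le hT).1 (hint.sub intervalIntegrable_const)
  have hlyap := intervalIntegral.integral_le_sub_of_hasDeriv_right_of_le hT hcont
    (fun s hs => (hasDerivAt_neg_two_sqrt_add_sq_of_hasDerivAt_neg_gradient (hdiff _)
      (hflow s hs.1.le) (hpos' s)).hasDerivWithinAt) hφ
    (fun s hs => by
      rw [(hflow s hs.1.le).deriv, norm_neg, sub_le_iff_le_add]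
      exact le_sq_div_sqrt_add_sq_add_half hv (hpos _) (hPL _))
  rw [intervalIntegral.integral_sub hint intervalIntegrable_const,
    intervalIntegral.integral_const, smul_eq_mul, sub_zero] at hlyap
  linarith [Real.sqrt_nonneg (f (y T) + v ^ 2)]

theorem intervalIntegral_norm_deriv_le_two_sqrt {T : ℝ} (hT : 0 ≤ T)
    (hint : IntervalIntegrable (fun t => ‖deriv y t‖) volume 0 T) :
    ∫ t in 0..T, ‖deriv y t‖ ≤ 2 * √(f (y 0)) := by
  have hlim : Tendsto (fun v : ℝ => 2 * √(f (y 0) + v ^ 2) + T * (v / 2)) (𝓝[>] 0)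
      (𝓝 (2 * √(f (y 0)))) := by
    apply tendsto_nhdsWithin_of_tendsto_nhds
    simpa using
      (by fun_prop : Continuous fun v : ℝ => 2 * √(f (y 0) + v ^ 2) + T * (v / 2)).tendsto 0
  refine ge_of_tendsto hlim ?_
  filter_upwards [self_mem_nhdsWithin] with v hv
  exact intervalIntegral_norm_deriv_le_two_sqrt_add_sq hpos hdiff hPL hflow hT hv hint

end GradientFlow

theorem setIntegral_Ioi_le_of_intervalIntegral_le {g : ℝ → ℝ} {a C : ℝ} (hC : 0 ≤ C)
    (h : ∀ T, a ≤ T → IntervalIntegrable g volume a T → ∫ t in a..T, g t ≤ C) :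
    ∫ t in Ioi a, g t ≤ C := by
  by_cases hg : IntegrableOn g (Ioi a)
  · refine le_of_tendsto (intervalIntegral_tendsto_integral_Ioi a hg tendsto_id) ?_
    filter_upwards [eventually_ge_atTop a] with T hT
    exact h T hT <| (intervalIntegrable_iff_integrableOn_Ioc_of_le hT).2 <|
      hg.mono_set Ioc_subset_Ioi_self
  · rwa [integral_undef hg]

theorem pl_gradient_flow_finite_length_general (n : ℕ) (f : EuclideanSpace ℝ (Fin n) → ℝ)
    (hpos : ∀ x, 0 ≤ f x) (hdiff : Differentiable ℝ f)
    (hPL : ∀ x, ‖gradient f x‖ ^ 2 ≥ f x)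
    (y : ℝ → EuclideanSpace ℝ (Fin n)) (y₀ : EuclideanSpace ℝ (Fin n))
    (hy₀ : y 0 = y₀)
    (hflow : ∀ t : ℝ, 0 ≤ t → HasDerivAt y (-gradient f (y t)) t) :
    ∫ t in Set.Ioi (0 : ℝ), ‖deriv y t‖ ≤ 2 * Real.sqrt (f y₀) := by
  subst hy₀
  exact setIntegral_Ioi_le_of_intervalIntegral_le (by positivity) fun T hT hint =>
    intervalIntegral_norm_deriv_le_two_sqrt hpos hdiff hPL hflow hT hint

/-- Finite length of gradient flow trajectories for a nonnegative
`C^{1,1}_loc` function with `inf f = 0` satisfying `‖∇f‖² ≥ f`. -/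
theorem pl_gradient_flow_finite_length (n : ℕ) (f : EuclideanSpace ℝ (Fin n) → ℝ)
    (hpos : ∀ x, 0 ≤ f x) (hdiff : Differentiable ℝ f)
    (hlip : ∀ K : Set (EuclideanSpace ℝ (Fin n)), IsCompact K →
      ∃ L : NNReal, LipschitzOnWith L (gradient f) K)
    (hinf : (⨅ x, f x) = 0)
    (hPL : ∀ x, ‖gradient f x‖ ^ 2 ≥ f x)
    (y : ℝ → EuclideanSpace ℝ (Fin n)) (y₀ : EuclideanSpace ℝ (Fin n))
    (hy₀ : y 0 = y₀)
    (hflow : ∀ t : ℝ, 0 ≤ t → HasDerivAt y (-gradient f (y t)) t) :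
    ∫ t in Set.Ioi (0 : ℝ), ‖deriv y t‖ ≤ 2 * Real.sqrt (f y₀) :=
  pl_gradient_flow_finite_length_general n f hpos hdiff hPL y y₀ hy₀ hflow
end

section
/- Let f : ℝⁿ → ℝ be a C^{1,1}_loc function (differentiable with locally Lipschitz gradient) satisfying the Polyak-Łojasiewicz inequality with some constant C > 0 and such that inf f > −∞. Then f attains its infimum: argmin(f) is nonempty. -/
/-!
If `f` never attained `m = inf f`, then `g = √(f - m)` would be differentiable with
`‖Dg‖ = ‖∇f‖ / (2 √(f - m)) ≥ √C / 2` everywhere, by the PŁ inequality. On the other hand,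
a continuous function bounded below on a proper space has, for every `ε > 0`, a point `x`
with `g x - ε ‖x - y‖ ≤ g y` for all `y` (a weak Ekeland principle: take a minimizer of the
coercive function `g + ε ‖· - x₀‖`), and at such a point `‖Dg x‖ ≤ ε`. Taking `ε = √C / 4`
gives a contradiction.
-/

open Filter Set

theorem Continuous.exists_forall_sub_mul_dist_le {X : Type*} [PseudoMetricSpace X] [ProperSpace X]
    [Nonempty X] {g : X → ℝ} (hg : Continuous g) (hbdd : BddBelow (range g)) {ε : ℝ}
    (hε : 0 < ε) : ∃ x, ∀ y, g x - ε * dist x y ≤ g y := by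
  obtain ⟨b, hb⟩ := hbdd
  obtain ⟨x₀⟩ := ‹Nonempty X›
  have hcoercive : Tendsto (fun y => g y + ε * dist y x₀) (cocompact X) atTop :=
    tendsto_atTop_add_left_of_le _ b (fun y => hb (mem_range_self y))
      ((tendsto_dist_right_cocompact_atTop x₀).const_mul_atTop hε)
  obtain ⟨x, hx⟩ := (by fun_prop : Continuous fun y => g y + ε * dist y x₀).exists_forall_le
    hcoercive
  refine ⟨x, fun y => ?_⟩
  have htri : dist y x₀ ≤ dist x y + dist x x₀ := dist_triangle_left y x₀ x
  linarith [hx y, mul_le_mul_of_nonneg_left htri hε.le]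

theorem HasFDerivAt.neg_mul_norm_le_apply_of_forall_sub_mul_dist_le {E : Type*}
    [NormedAddCommGroup E] [NormedSpace ℝ E] {g : E → ℝ} {D : StrongDual ℝ E} {x : E} {ε : ℝ}
    (hg : HasFDerivAt g D x) (hx : ∀ y, g x - ε * dist x y ≤ g y) (v : E) :
    -(ε * ‖v‖) ≤ D v := by
  set φ : ℝ → ℝ := fun t => g (x + t • v) + ε * ‖v‖ * t
  have hline : HasDerivAt (fun t : ℝ => x + t • v) v 0 := by
    simpa using ((hasDerivAt_id (0 : ℝ)).smul_const v).const_add x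
  have hg' : HasFDerivAt g D (x + (0 : ℝ) • v) := by simpa using hg
  have hφ : HasDerivAt φ (D v + ε * ‖v‖ * 1) 0 :=
    (hg'.comp_hasDerivAt 0 hline).add ((hasDerivAt_id (0 : ℝ)).const_mul (ε * ‖v‖))
  have hmin : IsMinOn φ (Ici 0) 0 := fun t (ht : 0 ≤ t) => by
    have hxt := hx (x + t • v)
    simp only [dist_self_add_right, norm_smul, Real.norm_of_nonneg ht] at hxt
    simp only [mem_ofPred_eq, φ, zero_smul, add_zero, mul_zero]
    linarith
  have hone : (1 : ℝ) ∈ posTangentConeAt (Ici 0) 0 :=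
    mem_posTangentConeAt_of_segment_subset (by simp [segment_eq_Icc, Icc_subset_Ici_self])
  have hderiv := hmin.localize.hasFDerivWithinAt_nonneg hφ.hasFDerivAt.hasFDerivWithinAt hone
  simp only [ContinuousLinearMap.toSpanSingleton_apply, smul_eq_mul, one_mul] at hderiv
  linarith

theorem HasFDerivAt.norm_le_of_forall_sub_mul_dist_le {E : Type*}
    [NormedAddCommGroup E] [NormedSpace ℝ E] {g : E → ℝ} {D : StrongDual ℝ E} {x : E} {ε : ℝ}
    (hg : HasFDerivAt g D x) (hx : ∀ y, g x - ε * dist x y ≤ g y) (hε : 0 ≤ ε) : ‖D‖ ≤ ε := by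
  refine D.opNorm_le_bound hε fun v => abs_le.2 ⟨?_, ?_⟩
  · exact hg.neg_mul_norm_le_apply_of_forall_sub_mul_dist_le hx v
  · simpa using hg.neg_mul_norm_le_apply_of_forall_sub_mul_dist_le hx (-v)

theorem HasFDerivAt.le_norm_fderiv_sqrt_sub {E : Type*} [NormedAddCommGroup E] [NormedSpace ℝ E]
    {f : E → ℝ} {f' : StrongDual ℝ E} {x : E} {m C : ℝ} (hf : HasFDerivAt f f' x)
    (hm : m < f x) (hC : 0 ≤ C) (hPL : C * (f x - m) ≤ ‖f'‖ ^ 2) :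
    √C / 2 ≤ ‖fderiv ℝ (fun y => √(f y - m)) x‖ := by
  have ha : 0 < √(f x - m) := Real.sqrt_pos.2 (sub_pos.2 hm)
  have hf' : √C * √(f x - m) ≤ ‖f'‖ := by
    rw [← Real.sqrt_mul hC]
    exact (Real.sqrt_le_sqrt hPL).trans_eq (Real.sqrt_sq (norm_nonneg _))
  rw [((hf.sub_const m).sqrt (sub_pos.2 hm).ne').fderiv, norm_smul,
    Real.norm_of_nonneg (by positivity)]
  calc √C / 2 = 1 / (2 * √(f x - m)) * (√C * √(f x - m)) := by field_simp
    _ ≤ 1 / (2 * √(f x - m)) * ‖f'‖ := by gcongr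

theorem pl_C11_attains_infimum_general (n : ℕ) (f : EuclideanSpace ℝ (Fin n) → ℝ)
    (hdiff : Differentiable ℝ f)
    (hbdd : BddBelow (Set.range f))
    (C : ℝ) (hC : 0 < C)
    (hPL : ∀ x, ‖gradient f x‖ ^ 2 ≥ C * (f x - ⨅ y, f y)) :
    {x | f x = ⨅ y, f y}.Nonempty := by
  by_contra hne
  set m := ⨅ y, f y
  have hm : ∀ x, m < f x := fun x => (ciInf_le hbdd x).lt_of_ne fun h => hne ⟨x, h.symm⟩
  set g := fun x => √(f x - m)
  have hg : Differentiable ℝ g := fun x => ((hdiff x).sub_const m).sqrt (sub_pos.2 (hm x)).ne'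
  obtain ⟨x, hx⟩ := hg.continuous.exists_forall_sub_mul_dist_le
    ⟨0, by rintro _ ⟨y, rfl⟩; positivity⟩ (ε := √C / 4) (by positivity)
  have hupper := (hg x).hasFDerivAt.norm_le_of_forall_sub_mul_dist_le hx (by positivity)
  have hlower := (hdiff x).hasFDerivAt.le_norm_fderiv_sqrt_sub (hm x) hC.le
    (by rw [← (InnerProductSpace.toDual ℝ _).symm.norm_map]; exact hPL x)
  linarith [Real.sqrt_pos.2 hC]

/-- A `C^{1,1}_loc` PŁ function that is bounded below attains its
infimum. -/
theorem pl_C11_attains_infimum (n : ℕ) (f : EuclideanSpace ℝ (Fin n) → ℝ)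
    (hdiff : Differentiable ℝ f)
    (hlip : ∀ K : Set (EuclideanSpace ℝ (Fin n)), IsCompact K →
      ∃ L : NNReal, LipschitzOnWith L (gradient f) K)
    (hbdd : BddBelow (Set.range f))
    (C : ℝ) (hC : 0 < C)
    (hPL : ∀ x, ‖gradient f x‖ ^ 2 ≥ C * (f x - ⨅ y, f y)) :
    {x | f x = ⨅ y, f y}.Nonempty :=
  pl_C11_attains_infimum_general n f hdiff hbdd C hC hPL
end

section
/- Let f : ℝⁿ → ℝ be a C² function with min f = 0 satisfying ‖∇f(x)‖² ≥ f(x) for all x ∈ ℝⁿ, and let H = ∇²f denote its Hessian. Then for every minimizer x ∈ argmin(f) and every vector u ∈ ℝⁿ, (1/2)·⟨H(x)u, u⟩ ≤ ‖H(x)u‖². In particular every nonzero eigenvalue of the positive semidefinite matrix H(x) lies in the interval [1/2, ∞). -/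
/-!
At a minimizer `x` the gradient vanishes, so along the line `t ↦ x + t • u` the rescaled
gradient `t⁻¹ • ∇f (x + t • u)` tends to `H u`, and by L'Hôpital `(f (x + t • u) - f x) / t²`
tends to `⟪H u, u⟫ / 2`. Passing to the limit in `0 ≤ f - min f ≤ ‖∇f‖²`, divided by `t²`,
gives `0 ≤ ⟪H u, u⟫` and `⟪H u, u⟫ / 2 ≤ ‖H u‖²`. For an eigenvector `H v = μ v` the latter
reads `μ / 2 ≤ μ²`, and the former makes `μ` positive.
-/

open scoped RealInnerProductSpace
open Filter Topology

theorem tendsto_line_nhds {E : Type*} [AddCommGroup E] [TopologicalSpace E] [Module ℝ E]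
    [ContinuousAdd E] [ContinuousSMul ℝ E] (x u : E) :
    Tendsto (fun t : ℝ => x + t • u) (𝓝 0) (𝓝 x) :=
  Continuous.tendsto' (by fun_prop) 0 x (by simp)

section LineRestriction

variable {E : Type*} [NormedAddCommGroup E] [InnerProductSpace ℝ E] [CompleteSpace E]
  {f : E → ℝ} {x : E} (u : E)

theorem IsLocalMin.gradient_eq_zero (hmin : IsLocalMin f x) : gradient f x = 0 := by
  simp [gradient, hmin.fderiv_eq_zero]

theorem ContDiff.gradient {n : WithTop ℕ∞} (hf : ContDiff ℝ (n + 1) f) :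
    ContDiff ℝ n (_root_.gradient f) :=
  (InnerProductSpace.toDual ℝ E).symm.contDiff.comp (hf.fderiv_right le_rfl)

theorem tendsto_inv_smul_gradient_line (hx : gradient f x = 0)
    (hg : DifferentiableAt ℝ (gradient f) x) :
    Tendsto (fun t : ℝ => t⁻¹ • gradient f (x + t • u)) (𝓝[≠] 0)
      (𝓝 (fderiv ℝ (gradient f) x u)) := by
  have hline : HasDerivAt (fun t : ℝ => x + t • u) u 0 := by
    simpa using ((hasDerivAt_id (0 : ℝ)).smul_const u).const_add x
  have hg' : HasFDerivAt (gradient f) (fderiv ℝ (gradient f) x) (x + (0 : ℝ) • u) := by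
    simpa using hg.hasFDerivAt
  have hslope := hasDerivAt_iff_tendsto_slope.1 (hg'.comp_hasDerivAt 0 hline)
  have hslope_eq : slope (gradient f ∘ fun t : ℝ => x + t • u) 0 =
      fun t : ℝ => t⁻¹ • gradient f (x + t • u) := by
    funext t; simp [slope_def_module, hx]
  rwa [hslope_eq] at hslope

theorem tendsto_sub_div_sq_line (hf : ∀ᶠ y in 𝓝 x, DifferentiableAt ℝ f y)
    (hx : gradient f x = 0) (hg : DifferentiableAt ℝ (gradient f) x) :
    Tendsto (fun t : ℝ => (f (x + t • u) - f x) / t ^ 2) (𝓝[>] 0)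
      (𝓝 (⟪fderiv ℝ (gradient f) x u, u⟫ / 2)) := by
  have hf' : ∀ᶠ t in 𝓝[>] (0 : ℝ), DifferentiableAt ℝ f (x + t • u) :=
    ((tendsto_line_nhds x u).eventually hf).filter_mono nhdsWithin_le_nhds
  have hcont : ContinuousWithinAt (fun t : ℝ => f (x + t • u) - f x) (Set.Ioi 0) 0 := by
    have hfx : ContinuousAt (fun t : ℝ => f (x + t • u)) 0 :=
      hf.self_of_nhds.continuousAt.comp_of_eq (by fun_prop) (by simp)
    exact (hfx.sub continuousAt_const).continuousWithinAt
  refine HasDerivAt.lhopital_zero_nhdsGT (f' := fun t => ⟪gradient f (x + t • u), u⟫)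
    (g' := fun t => 2 * t) ?_ (.of_forall fun t => by simpa using hasDerivAt_pow 2 t) ?_
    (by simpa using hcont.tendsto) ?_ ?_
  · filter_upwards [hf'] with t ht
    have hline : HasDerivAt (fun s : ℝ => x + s • u) u t := by
      simpa using ((hasDerivAt_id t).smul_const u).const_add x
    simpa [inner_gradient_left] using (ht.hasFDerivAt.comp_hasDerivAt t hline).sub_const (f x)
  · filter_upwards [self_mem_nhdsWithin] with t (ht : 0 < t)
    positivity
  · simpa using
      ((continuous_pow 2).tendsto (0 : ℝ)).mono_left (nhdsWithin_le_nhds (s := Set.Ioi 0))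
  · refine (((tendsto_inv_smul_gradient_line u hx hg).mono_left
      (nhdsWithin_mono _ fun t (ht : 0 < t) => ht.ne')).inner tendsto_const_nhds).div_const 2
      |>.congr' ?_
    filter_upwards [self_mem_nhdsWithin] with t (ht : 0 < t)
    rw [real_inner_smul_left, inv_mul_eq_div, div_div, mul_comm]

theorem IsLocalMin.inner_fderiv_gradient_self_nonneg (hmin : IsLocalMin f x)
    (hf : ∀ᶠ y in 𝓝 x, DifferentiableAt ℝ f y) (hg : DifferentiableAt ℝ (gradient f) x) :
    0 ≤ ⟪fderiv ℝ (gradient f) x u, u⟫ := by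
  have hquot_nonneg : ∀ᶠ t in 𝓝[>] (0 : ℝ), 0 ≤ (f (x + t • u) - f x) / t ^ 2 := by
    filter_upwards [((tendsto_line_nhds x u).eventually hmin).filter_mono nhdsWithin_le_nhds]
      with t ht
    exact div_nonneg (sub_nonneg.2 ht) (sq_nonneg t)
  linarith [ge_of_tendsto (tendsto_sub_div_sq_line u hf hmin.gradient_eq_zero hg) hquot_nonneg]

theorem IsLocalMin.inner_fderiv_gradient_div_two_le_norm_sq (hmin : IsLocalMin f x)
    (hf : ∀ᶠ y in 𝓝 x, DifferentiableAt ℝ f y) (hg : DifferentiableAt ℝ (gradient f) x)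
    (hPL : ∀ᶠ y in 𝓝 x, f y - f x ≤ ‖gradient f y‖ ^ 2) :
    ⟪fderiv ℝ (gradient f) x u, u⟫ / 2 ≤ ‖fderiv ℝ (gradient f) x u‖ ^ 2 := by
  have hnorm := (((tendsto_inv_smul_gradient_line u hmin.gradient_eq_zero hg).mono_left
    (nhdsWithin_mono _ fun t (ht : 0 < t) => ht.ne')).norm).pow 2
  refine le_of_tendsto_of_tendsto (tendsto_sub_div_sq_line u hf hmin.gradient_eq_zero hg) hnorm ?_
  filter_upwards [((tendsto_line_nhds x u).eventually hPL).filter_mono nhdsWithin_le_nhds]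
    with t ht
  rw [norm_smul, mul_pow, norm_inv, Real.norm_eq_abs, inv_pow, sq_abs, ← div_eq_inv_mul]
  gcongr

end LineRestriction

theorem le_of_hasEigenvalue_of_mul_inner_le_norm_sq {E : Type*} [NormedAddCommGroup E]
    [InnerProductSpace ℝ E] {T : E →ₗ[ℝ] E} {c μ : ℝ} (hpos : ∀ u, 0 ≤ ⟪T u, u⟫)
    (hT : ∀ u, c * ⟪T u, u⟫ ≤ ‖T u‖ ^ 2) (hμ : μ ≠ 0) (hev : Module.End.HasEigenvalue T μ) :
    c ≤ μ := by
  obtain ⟨v, hv⟩ := hev.exists_hasEigenvector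
  have hv2 : 0 < ‖v‖ ^ 2 := by have := hv.2; positivity
  have h0 := hpos v
  have h1 := hT v
  rw [hv.apply_eq_smul, real_inner_smul_left, real_inner_self_eq_norm_sq] at h0 h1
  rw [norm_smul, mul_pow, Real.norm_eq_abs, sq_abs] at h1
  have hμpos : 0 < μ := lt_of_le_of_ne (nonneg_of_mul_nonneg_left h0 hv2) hμ.symm
  nlinarith [mul_pos hμpos hv2]

theorem pl_hessian_spectral_gap_general (n : ℕ) (f : EuclideanSpace ℝ (Fin n) → ℝ)
    (hf : ContDiff ℝ 2 f) (hpos : ∀ x, 0 ≤ f x)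
    (hPL : ∀ x, ‖gradient f x‖ ^ 2 ≥ f x) :
    ∀ x, f x = 0 →
      (∀ u, (1 / 2 : ℝ) * ⟪fderiv ℝ (gradient f) x u, u⟫ ≤ ‖fderiv ℝ (gradient f) x u‖ ^ 2) ∧
      ∀ μ : ℝ, μ ≠ 0 →
        Module.End.HasEigenvalue ((fderiv ℝ (gradient f) x :
          EuclideanSpace ℝ (Fin n) →ₗ[ℝ] EuclideanSpace ℝ (Fin n))) μ →
        1 / 2 ≤ μ := by
  intro x hx
  have hmin : IsLocalMin f x := .of_forall fun y => hx ▸ hpos y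
  have hdiff : ∀ᶠ y in 𝓝 x, DifferentiableAt ℝ f y :=
    .of_forall fun y => (hf.differentiable two_ne_zero).differentiableAt
  have hgrad : DifferentiableAt ℝ (gradient f) x :=
    ((hf.gradient (n := 1)).differentiable one_ne_zero).differentiableAt
  have hPL' : ∀ᶠ y in 𝓝 x, f y - f x ≤ ‖gradient f y‖ ^ 2 :=
    .of_forall fun y => by simpa [hx] using hPL y
  have hquad : ∀ u, (1 / 2 : ℝ) * ⟪fderiv ℝ (gradient f) x u, u⟫ ≤
      ‖fderiv ℝ (gradient f) x u‖ ^ 2 := fun u => by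
    rw [one_div_mul_eq_div]
    exact hmin.inner_fderiv_gradient_div_two_le_norm_sq u hdiff hgrad hPL'
  exact ⟨hquad, fun μ hμ => le_of_hasEigenvalue_of_mul_inner_le_norm_sq
    (fun u => hmin.inner_fderiv_gradient_self_nonneg u hdiff hgrad) hquad hμ⟩

/-- At any minimizer of a `C²` function with `min f = 0` satisfying
`‖∇f‖² ≥ f`, the Hessian `H(x) = ∇²f(x)` satisfies `(1/2)⟨H(x)u, u⟩ ≤ ‖H(x)u‖²` for all
`u`; in particular every nonzero eigenvalue of `H(x)` lies in `[1/2, ∞)`. -/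
theorem pl_hessian_spectral_gap (n : ℕ) (f : EuclideanSpace ℝ (Fin n) → ℝ)
    (hf : ContDiff ℝ 2 f) (hpos : ∀ x, 0 ≤ f x) (hmin : ∃ x, f x = 0)
    (hPL : ∀ x, ‖gradient f x‖ ^ 2 ≥ f x) :
    ∀ x, f x = 0 →
      (∀ u, (1 / 2 : ℝ) * ⟪fderiv ℝ (gradient f) x u, u⟫ ≤ ‖fderiv ℝ (gradient f) x u‖ ^ 2) ∧
      ∀ μ : ℝ, μ ≠ 0 →
        Module.End.HasEigenvalue ((fderiv ℝ (gradient f) x :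
          EuclideanSpace ℝ (Fin n) →ₗ[ℝ] EuclideanSpace ℝ (Fin n))) μ →
        1 / 2 ≤ μ :=
  pl_hessian_spectral_gap_general n f hf hpos hPL
end

section
/- Let F be a nonempty closed subset of ℝⁿ such that d_F : x ↦ (1/2)·dist(x, F)² is differentiable with locally Lipschitz gradient, so that the projection proj_F(x) onto F is unique for every x and ∇d_F(x) = x − proj_F(x). Let φ(t, x) be the flow of −∇d_F. Then for all t ≥ 0 and x ∈ ℝⁿ: φ(t, x) = proj_F(x) + e^{−t}·(x − proj_F(x)) and proj_F(φ(t, x)) = proj_F(x). -/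
/-! Points of the segment from `x` to its nearest point `p ∈ F` still have `p` as their nearest
point, so on that segment `−∇d_F(y) = p − y` and the explicit curve `p + e^{−t}(x − p)` solves
the flow equation. Since `∇d_F` is Lipschitz on compact sets, which contain both trajectories up
to time `t`, solutions of the flow are unique. -/

open Set Metric

theorem Wbtw.infDist_eq_dist {E : Type*} [NormedAddCommGroup E] [NormedSpace ℝ E]
    {F : Set E} {x y p : E} (h : Wbtw ℝ x y p)
    (hp : p ∈ F) (hxp : dist x p = infDist x F) : infDist y F = dist y p := by
  refine le_antisymm (infDist_le_dist_of_mem hp) ((le_infDist ⟨p, hp⟩).2 fun z hz => ?_)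
  have hsplit := h.dist_add_dist
  have htri := dist_triangle x y z
  have hmin : dist x p ≤ dist x z := hxp ▸ infDist_le_dist_of_mem hz
  linarith

theorem wbtw_add_smul_sub {R V : Type*} [Ring R] [PartialOrder R] [IsOrderedRing R]
    [AddCommGroup V] [Module R V] {p x : V} {s : R} (hs : s ∈ Icc (0 : R) 1) :
    Wbtw R x (p + s • (x - p)) p := by
  rw [wbtw_comm, add_comm, ← AffineMap.lineMap_apply_module']
  exact ⟨s, hs, rfl⟩

theorem hasDerivAt_add_exp_neg_smul {E : Type*} [NormedAddCommGroup E] [NormedSpace ℝ E]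
    (p v : E) (s : ℝ) :
    HasDerivAt (fun t => p + Real.exp (-t) • v) (-(Real.exp (-s) • v)) s := by
  have hexp : HasDerivAt (fun t => Real.exp (-t)) (-Real.exp (-s)) s := by
    simpa using (hasDerivAt_neg s).exp
  simpa [neg_smul] using (hexp.smul_const v).const_add p

theorem ODE_solution_unique_of_lipschitzOnWith_isCompact {E : Type*} [NormedAddCommGroup E]
    [NormedSpace ℝ E] {v : E → E} (hv : ∀ K : Set E, IsCompact K → ∃ L, LipschitzOnWith L v K)
    {f g : ℝ → E} {a b : ℝ} (hf : ∀ t ∈ Icc a b, HasDerivAt f (v (f t)) t)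
    (hg : ∀ t ∈ Icc a b, HasDerivAt g (v (g t)) t) (ha : f a = g a) : EqOn f g (Icc a b) := by
  have hf_cont : ContinuousOn f (Icc a b) := fun t ht =>
    (hf t ht).continuousAt.continuousWithinAt
  have hg_cont : ContinuousOn g (Icc a b) := fun t ht =>
    (hg t ht).continuousAt.continuousWithinAt
  obtain ⟨L, hL⟩ := hv (f '' Icc a b ∪ g '' Icc a b)
    ((isCompact_Icc.image_of_continuousOn hf_cont).union
      (isCompact_Icc.image_of_continuousOn hg_cont))
  exact ODE_solution_unique_of_mem_Icc_right (v := fun _ => v) (fun _ _ => hL)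
    hf_cont (fun t ht => (hf t (Ico_subset_Icc_self ht)).hasDerivWithinAt)
    (fun t ht => Or.inl (mem_image_of_mem f (Ico_subset_Icc_self ht)))
    hg_cont (fun t ht => (hg t (Ico_subset_Icc_self ht)).hasDerivWithinAt)
    (fun t ht => Or.inr (mem_image_of_mem g (Ico_subset_Icc_self ht))) ha

theorem flow_of_neg_grad_sq_dist_general (n : ℕ) (F : Set (EuclideanSpace ℝ (Fin n)))
    (dF : EuclideanSpace ℝ (Fin n) → ℝ)
    (hlip : ∀ K : Set (EuclideanSpace ℝ (Fin n)), IsCompact K →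
      ∃ L : NNReal, LipschitzOnWith L (gradient dF) K)
    (proj : EuclideanSpace ℝ (Fin n) → EuclideanSpace ℝ (Fin n))
    (hprojF : ∀ x, proj x ∈ F)
    (hprojdist : ∀ x, dist x (proj x) = Metric.infDist x F)
    (hprojuniq : ∀ x y, y ∈ F → dist x y = Metric.infDist x F → y = proj x)
    (hgrad : ∀ x, gradient dF x = x - proj x)
    (φ : ℝ → EuclideanSpace ℝ (Fin n) → EuclideanSpace ℝ (Fin n))
    (hφ0 : ∀ x, φ 0 x = x)
    (hφ : ∀ x, ∀ t : ℝ, 0 ≤ t → HasDerivAt (fun s => φ s x) (-gradient dF (φ t x)) t) :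
    ∀ t : ℝ, 0 ≤ t → ∀ x,
      φ t x = proj x + Real.exp (-t) • (x - proj x) ∧ proj (φ t x) = proj x := by
  intro t ht x
  set p := proj x
  have hproj_segment : ∀ s : ℝ, 0 ≤ s → proj (p + Real.exp (-s) • (x - p)) = p := by
    intro s hs
    have hs' : Real.exp (-s) ∈ Icc (0 : ℝ) 1 :=
      ⟨(Real.exp_pos _).le, Real.exp_le_one_iff.2 (neg_nonpos.2 hs)⟩
    refine (hprojuniq _ p (hprojF x) ?_).symm
    exact ((wbtw_add_smul_sub hs').infDist_eq_dist (hprojF x) (hprojdist x)).symm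
  have hcurve : ∀ s ∈ Icc 0 t, HasDerivAt (fun s => p + Real.exp (-s) • (x - p))
      (-gradient dF (p + Real.exp (-s) • (x - p))) s := fun s hs => by
    rw [hgrad, hproj_segment s hs.1, add_sub_cancel_left]
    exact hasDerivAt_add_exp_neg_smul p (x - p) s
  have hflow : φ t x = p + Real.exp (-t) • (x - p) :=
    ODE_solution_unique_of_lipschitzOnWith_isCompact (v := -gradient dF)
      (fun K hK => (hlip K hK).imp fun _ hL => by simpa using hL.neg)
      (fun s hs => hφ x s hs.1) hcurve (by simp [hφ0]) ⟨ht, le_rfl⟩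
  exact ⟨hflow, hflow ▸ hproj_segment t ht⟩

/-- If `d_F = (1/2)·dist(·, F)²` is differentiable with locally
Lipschitz gradient (so that the nearest-point projection `proj_F` is single-valued and
`∇d_F(x) = x − proj_F(x)`), then the flow of `−∇d_F` is
`φ(t,x) = proj_F(x) + e^{−t}(x − proj_F(x))`, and `proj_F(φ(t,x)) = proj_F(x)`. -/
theorem flow_of_neg_grad_sq_dist (n : ℕ) (F : Set (EuclideanSpace ℝ (Fin n)))
    (hne : F.Nonempty) (hcl : IsClosed F)
    (dF : EuclideanSpace ℝ (Fin n) → ℝ)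
    (hdF : dF = fun x => (1 / 2) * Metric.infDist x F ^ 2)
    (hdiff : Differentiable ℝ dF)
    (hlip : ∀ K : Set (EuclideanSpace ℝ (Fin n)), IsCompact K →
      ∃ L : NNReal, LipschitzOnWith L (gradient dF) K)
    (proj : EuclideanSpace ℝ (Fin n) → EuclideanSpace ℝ (Fin n))
    (hprojF : ∀ x, proj x ∈ F)
    (hprojdist : ∀ x, dist x (proj x) = Metric.infDist x F)
    (hprojuniq : ∀ x y, y ∈ F → dist x y = Metric.infDist x F → y = proj x)
    (hgrad : ∀ x, gradient dF x = x - proj x)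
    (φ : ℝ → EuclideanSpace ℝ (Fin n) → EuclideanSpace ℝ (Fin n))
    (hφ0 : ∀ x, φ 0 x = x)
    (hφ : ∀ x, ∀ t : ℝ, 0 ≤ t → HasDerivAt (fun s => φ s x) (-gradient dF (φ t x)) t) :
    ∀ t : ℝ, 0 ≤ t → ∀ x,
      φ t x = proj x + Real.exp (-t) • (x - proj x) ∧ proj (φ t x) = proj x :=
  flow_of_neg_grad_sq_dist_general n F dF hlip proj hprojF hprojdist hprojuniq hgrad φ hφ0 hφ
end

section
/- Let F be a nonempty closed subset of ℝⁿ such that d_F : x ↦ (1/2)·dist(x, F)² is differentiable with locally Lipschitz gradient, so that the projection proj_F(x) onto F is unique for every x. Then for every x ∈ ℝⁿ, writing x_∞ = proj_F(x), one has proj_F(x_∞ + s·(x − x_∞)) = x_∞ for all s ≥ 0; consequently ⟨x − x_∞, y − x_∞⟩ ≤ 0 for every y ∈ F, i.e. every point x ∉ F is separated from F by an affine hyperplane through x_∞. -/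
/-!
The gradient of `d_F = ½ dist(·, F)²` at `x` is `x - proj_F x`, since `d_F` touches the smooth
function `½ ‖· - proj_F x‖²` from below at `x`. Along the gradient flow `ẏ = y - proj_F y`
(which exists by Picard–Lindelöf, the gradient being locally Lipschitz) one gets
`d_F(y t) = e^{2t} d_F(y 0)`, so `dist(y t, F)` grows like `e^t`; but the flow has speed
`dist(y t, F)`, so `y t` stays within `e^t dist(y 0, F)` of `proj_F (y 0)`. Hence `proj_F (y 0)`
remains the nearest point and the flow is the ray `proj_F (y 0) + e^t (y 0 - proj_F (y 0))`.
A continuity argument along the ray gives the first claim, and letting `s → ∞` in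
`‖s v‖ ≤ ‖s v + x_∞ - y‖` gives the separation.
-/

open Set Metric Real
open scoped RealInnerProductSpace

theorem LocallyLipschitz.of_forall_isCompact {X Y : Type*} [PseudoEMetricSpace X]
    [WeaklyLocallyCompactSpace X] [PseudoEMetricSpace Y] {f : X → Y}
    (hf : ∀ K : Set X, IsCompact K → ∃ L, LipschitzOnWith L f K) : LocallyLipschitz f := by
  intro x
  obtain ⟨K, hK, hKx⟩ := exists_compact_mem_nhds x
  obtain ⟨L, hL⟩ := hf K hK
  exact ⟨L, K, hKx, hL⟩

theorem eq_exp_smul_of_hasDerivWithinAt {E : Type*} [NormedAddCommGroup E]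
    [NormedSpace ℝ E] {f : ℝ → E} {c a b : ℝ}
    (hf : ∀ t ∈ Icc a b, HasDerivWithinAt f (c • f t) (Icc a b) t) :
    ∀ t ∈ Icc a b, f t = exp (c * (t - a)) • f a := by
  set g : ℝ → E := fun t => exp (-(c * (t - a))) • f t
  have hg : ∀ t ∈ Icc a b, HasDerivWithinAt g 0 (Icc a b) t := by
    intro t ht
    have hexp : HasDerivAt (fun t => exp (-(c * (t - a)))) (exp (-(c * (t - a))) * -c) t := by
      simpa using (((hasDerivAt_id t).sub_const a).const_mul c).neg.exp
    refine (hexp.hasDerivWithinAt.smul (hf t ht)).congr_deriv ?_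
    rw [smul_smul, ← add_smul]
    ring_nf
    exact zero_smul ℝ _
  have hconst := constant_of_has_deriv_right_zero (fun t ht => (hg t ht).continuousWithinAt)
    fun t ht => (hg t (Ico_subset_Icc_self ht)).mono_of_mem_nhdsWithin (Icc_mem_nhdsGE_of_mem ht)
  intro t ht
  have := congrArg (exp (c * (t - a)) • ·) (hconst t ht)
  simpa [g, smul_smul, ← exp_add] using this

theorem dist_add_smul_sub_eq_infDist {E : Type*} [NormedAddCommGroup E] [NormedSpace ℝ E]
    {F : Set E} {x p : E} (hp : p ∈ F) (hxp : dist x p = infDist x F) {s : ℝ} (hs₀ : 0 ≤ s)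
    (hs₁ : s ≤ 1) : dist (p + s • (x - p)) p = infDist (p + s • (x - p)) F := by
  refine le_antisymm ?_ (infDist_le_dist_of_mem hp)
  have hz : dist (p + s • (x - p)) p = s * dist x p := by
    rw [dist_eq_norm, add_sub_cancel_left, norm_smul, Real.norm_of_nonneg hs₀, dist_eq_norm]
  have hxz : dist x (p + s • (x - p)) = (1 - s) * dist x p := by
    rw [dist_eq_norm, show x - (p + s • (x - p)) = (1 - s) • (x - p) by module, norm_smul,
      Real.norm_of_nonneg (by linarith), dist_eq_norm]
  refine (le_infDist ⟨p, hp⟩).2 fun w hw => ?_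
  have := hxp ▸ infDist_le_dist_of_mem hw (x := x)
  linarith [dist_triangle x (p + s • (x - p)) w]

theorem hasGradientAt_half_sq_infDist {E : Type*} [NormedAddCommGroup E]
    [InnerProductSpace ℝ E] [CompleteSpace E] {F : Set E} {x p : E} (hp : p ∈ F)
    (hxp : dist x p = infDist x F)
    (hd : DifferentiableAt ℝ (fun y => 1 / 2 * infDist y F ^ 2) x) :
    HasGradientAt (fun y => 1 / 2 * infDist y F ^ 2) (x - p) x := by
  have hq : HasGradientAt (fun y => 1 / 2 * ‖y - p‖ ^ 2) (x - p) x := by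
    refine ((((hasFDerivAt_id x).sub_const p).norm_sq).const_mul (1 / 2 : ℝ)).congr_fderiv ?_
    ext w
    simp
  have hmin : IsLocalMin (fun y => 1 / 2 * ‖y - p‖ ^ 2 - 1 / 2 * infDist y F ^ 2) x := by
    refine Filter.Eventually.of_forall fun y => ?_
    have : infDist y F ^ 2 ≤ ‖y - p‖ ^ 2 := by
      rw [← dist_eq_norm]
      exact pow_le_pow_left₀ infDist_nonneg (infDist_le_dist_of_mem hp) 2
    simp only [← hxp, dist_eq_norm, sub_self]
    linarith
  have := hmin.hasFDerivAt_eq_zero (hq.hasFDerivAt.sub hd.hasFDerivAt)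
  rw [sub_eq_zero] at this
  rw [hasGradientAt_iff_hasFDerivAt, this]
  exact hd.hasFDerivAt

structure IsNearestPointMap {E : Type*} [PseudoMetricSpace E] (F : Set E) (proj : E → E) :
    Prop where
  mem : ∀ x, proj x ∈ F
  dist_eq : ∀ x, dist x (proj x) = infDist x F
  eq_of_dist_eq : ∀ x y, y ∈ F → dist x y = infDist x F → y = proj x

namespace IsNearestPointMap

section NormedSpace

variable {E : Type*} [NormedAddCommGroup E] [NormedSpace ℝ E] {F : Set E} {proj : E → E}

theorem proj_add_smul_sub_eq (hproj : IsNearestPointMap F proj) (hcont : Continuous proj)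
    (hext : ∀ z, ∃ c > (1 : ℝ), ∀ σ ∈ Icc 1 c, proj (proj z + σ • (z - proj z)) = proj z)
    (x : E) {s : ℝ} (hs : 0 ≤ s) : proj (proj x + s • (x - proj x)) = proj x := by
  set p := proj x
  set v := x - p
  rcases le_total s 1 with hs1 | hs1
  · exact (hproj.eq_of_dist_eq _ _ (hproj.mem x)
      (dist_add_smul_sub_eq_infDist (hproj.mem x) (hproj.dist_eq x) hs hs1)).symm
  set S := {σ : ℝ | proj (p + σ • v) = p}
  have hS : IsClosed S := isClosed_eq (by fun_prop) continuous_const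
  refine (hS.inter isClosed_Icc).Icc_subset_of_forall_mem_nhdsWithin (b := s) ?_ ?_
    ⟨hs1, le_rfl⟩
  · change proj (p + (1 : ℝ) • v) = p
    rw [one_smul, add_sub_cancel]
  rintro T ⟨hT, hT1, -⟩
  obtain ⟨c, hc, hcT⟩ := hext (p + T • v)
  simp only [show proj (p + T • v) = p from hT, add_sub_cancel_left, smul_smul] at hcT
  have hT0 : 0 < T := by linarith
  refine Filter.mem_of_superset (Ioo_mem_nhdsGT (lt_mul_of_one_lt_left hT0 hc)) fun σ hσ => ?_
  have := hcT (σ / T) ⟨(one_le_div hT0).2 hσ.1.le, (div_le_iff₀ hT0).2 hσ.2.le⟩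
  rwa [div_mul_cancel₀ σ hT0.ne'] at this

end NormedSpace

variable {E : Type*} [NormedAddCommGroup E] [InnerProductSpace ℝ E] [CompleteSpace E]
  {F : Set E} {proj : E → E} {y : ℝ → E} {τ : ℝ}

theorem infDist_flow_eq (hproj : IsNearestPointMap F proj)
    (hgrad : ∀ x, HasGradientAt (fun x => 1 / 2 * infDist x F ^ 2) (x - proj x) x)
    (hy : ∀ t ∈ Icc 0 τ, HasDerivWithinAt y (y t - proj (y t)) (Icc 0 τ) t) :
    ∀ t ∈ Icc 0 τ, infDist (y t) F = exp t * infDist (y 0) F := by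
  have hφ : ∀ t ∈ Icc 0 τ, HasDerivWithinAt (fun t => 1 / 2 * infDist (y t) F ^ 2)
      ((2 : ℝ) • (1 / 2 * infDist (y t) F ^ 2)) (Icc 0 τ) t := by
    intro t ht
    refine ((hgrad (y t)).hasFDerivAt.comp_hasDerivWithinAt t (hy t ht)).congr_deriv ?_
    rw [InnerProductSpace.toDual_apply_apply, real_inner_self_eq_norm_sq, ← dist_eq_norm,
      hproj.dist_eq, smul_eq_mul]
    ring
  intro t ht
  have h := eq_exp_smul_of_hasDerivWithinAt hφ t ht
  rw [smul_eq_mul, sub_zero] at h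
  refine (sq_eq_sq₀ infDist_nonneg (mul_nonneg (exp_pos t).le infDist_nonneg)).1 ?_
  rw [mul_pow, ← exp_nat_mul]
  push_cast
  linarith

theorem dist_flow_le (hproj : IsNearestPointMap F proj)
    (hgrad : ∀ x, HasGradientAt (fun x => 1 / 2 * infDist x F ^ 2) (x - proj x) x)
    (hy : ∀ t ∈ Icc 0 τ, HasDerivWithinAt y (y t - proj (y t)) (Icc 0 τ) t) :
    ∀ t ∈ Icc 0 τ, dist (y t) (proj (y 0)) ≤ exp t * infDist (y 0) F := by
  have hf : ∀ t ∈ Icc 0 τ,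
      HasDerivWithinAt (fun t => y t - proj (y 0)) (y t - proj (y t)) (Icc 0 τ) t :=
    fun t ht => (hy t ht).sub_const _
  intro t ht
  simpa [dist_eq_norm] using image_norm_le_of_norm_deriv_right_le_deriv_boundary'
    (fun t ht => (hf t ht).continuousWithinAt)
    (fun t ht => (hf t (Ico_subset_Icc_self ht)).mono_of_mem_nhdsWithin
      (Icc_mem_nhdsGE_of_mem ht))
    (B := fun t => exp t * infDist (y 0) F) (by simp [← dist_eq_norm, hproj.dist_eq])
    (fun t _ => ((hasDerivAt_exp t).mul_const _).continuousAt.continuousWithinAt)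
    (fun t _ => ((hasDerivAt_exp t).mul_const _).hasDerivWithinAt)
    (fun t ht => by
      rw [← dist_eq_norm, hproj.dist_eq,
        hproj.infDist_flow_eq hgrad hy t (Ico_subset_Icc_self ht)])
    ht

theorem proj_flow_eq (hproj : IsNearestPointMap F proj)
    (hgrad : ∀ x, HasGradientAt (fun x => 1 / 2 * infDist x F ^ 2) (x - proj x) x)
    (hy : ∀ t ∈ Icc 0 τ, HasDerivWithinAt y (y t - proj (y t)) (Icc 0 τ) t) :
    ∀ t ∈ Icc 0 τ, proj (y t) = proj (y 0) := by
  intro t ht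
  refine (hproj.eq_of_dist_eq _ _ (hproj.mem _) (le_antisymm ?_ ?_)).symm
  · rw [hproj.infDist_flow_eq hgrad hy t ht]
    exact hproj.dist_flow_le hgrad hy t ht
  · exact infDist_le_dist_of_mem (hproj.mem _)

theorem flow_eq_ray (hproj : IsNearestPointMap F proj)
    (hgrad : ∀ x, HasGradientAt (fun x => 1 / 2 * infDist x F ^ 2) (x - proj x) x)
    (hy : ∀ t ∈ Icc 0 τ, HasDerivWithinAt y (y t - proj (y t)) (Icc 0 τ) t) :
    ∀ t ∈ Icc 0 τ, y t = proj (y 0) + exp t • (y 0 - proj (y 0)) := by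
  have hf : ∀ t ∈ Icc 0 τ, HasDerivWithinAt (fun t => y t - proj (y 0))
      ((1 : ℝ) • (y t - proj (y 0))) (Icc 0 τ) t := by
    intro t ht
    rw [one_smul, ← hproj.proj_flow_eq hgrad hy t ht]
    exact (hy t ht).sub_const _
  intro t ht
  have := eq_exp_smul_of_hasDerivWithinAt hf t ht
  rw [one_mul, sub_zero] at this
  rw [← this, add_sub_cancel]

theorem exists_one_lt_forall_proj_add_smul_sub_eq (hproj : IsNearestPointMap F proj)
    (hgrad : ∀ x, HasGradientAt (fun x => 1 / 2 * infDist x F ^ 2) (x - proj x) x)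
    {z : E} {L : NNReal} (hL : LipschitzOnWith L (fun x => x - proj x) (closedBall z 1)) :
    ∃ c > (1 : ℝ), ∀ σ ∈ Icc 1 c, proj (proj z + σ • (z - proj z)) = proj z := by
  have hd : 0 ≤ infDist z F := infDist_nonneg
  set C : NNReal := ⟨infDist z F + 1, by linarith⟩
  have hC : (0 : ℝ) < C := show 0 < infDist z F + 1 by linarith
  have hbound : ∀ x ∈ closedBall z (1 : NNReal), ‖x - proj x‖ ≤ C := by
    intro x hx
    rw [← dist_eq_norm, hproj.dist_eq, show (C : ℝ) = infDist z F + 1 from rfl]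
    rw [NNReal.coe_one, mem_closedBall] at hx
    linarith [infDist_le_infDist_add_dist (x := x) (y := z) (s := F)]
  have hPL := IsPicardLindelof.of_time_independent (tmin := 0) (tmax := 1 / C)
    (t₀ := ⟨0, by simp⟩) (r := 0) hbound (by simpa using hL) (by simp [hC.ne'])
  obtain ⟨y, hy0, hy⟩ := hPL.exists_eq_forall_mem_Icc_hasDerivWithinAt₀
  change y 0 = z at hy0
  refine ⟨exp (1 / C), one_lt_exp_iff.2 (by positivity), fun σ hσ => ?_⟩
  have hσ0 : 0 < σ := by linarith [hσ.1]
  have ht : log σ ∈ Icc 0 (1 / (C : ℝ)) :=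
    ⟨log_nonneg hσ.1, (log_le_iff_le_exp hσ0).2 hσ.2⟩
  have hray := hproj.flow_eq_ray hgrad hy _ ht
  rw [exp_log hσ0, hy0] at hray
  rw [← hray, ← hy0]
  exact hproj.proj_flow_eq hgrad hy _ ht

end IsNearestPointMap

theorem inner_sub_nonpos_of_forall_dist_le {E : Type*} [NormedAddCommGroup E]
    [InnerProductSpace ℝ E] {p v y : E}
    (h : ∀ s : ℝ, 0 ≤ s → dist (p + s • v) p ≤ dist (p + s • v) y) : ⟪v, y - p⟫ ≤ 0 := by
  have key : ∀ s : ℝ, 0 ≤ s → 2 * s * ⟪v, y - p⟫ ≤ ‖y - p‖ ^ 2 := by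
    intro s hs
    have hsq := pow_le_pow_left₀ dist_nonneg (h s hs) 2
    rw [dist_eq_norm, dist_eq_norm, add_sub_cancel_left,
      show p + s • v - y = s • v - (y - p) by abel, norm_sub_sq_real,
      real_inner_smul_left] at hsq
    linarith
  by_contra! hpos
  have := key ((‖y - p‖ ^ 2 + 1) / (2 * ⟪v, y - p⟫)) (by positivity)
  rw [mul_comm 2, mul_assoc, div_mul_cancel₀ _ (by positivity)] at this
  linarith

theorem proj_along_ray_and_separation_general (n : ℕ) (F : Set (EuclideanSpace ℝ (Fin n)))
    (dF : EuclideanSpace ℝ (Fin n) → ℝ)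
    (hdF : dF = fun x => (1 / 2) * Metric.infDist x F ^ 2)
    (hdiff : Differentiable ℝ dF)
    (hlip : ∀ K : Set (EuclideanSpace ℝ (Fin n)), IsCompact K →
      ∃ L : NNReal, LipschitzOnWith L (gradient dF) K)
    (proj : EuclideanSpace ℝ (Fin n) → EuclideanSpace ℝ (Fin n))
    (hprojF : ∀ x, proj x ∈ F)
    (hprojdist : ∀ x, dist x (proj x) = Metric.infDist x F)
    (hprojuniq : ∀ x y, y ∈ F → dist x y = Metric.infDist x F → y = proj x) :
    ∀ x, (∀ s : ℝ, 0 ≤ s → proj (proj x + s • (x - proj x)) = proj x) ∧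
      ∀ y ∈ F, ⟪x - proj x, y - proj x⟫ ≤ 0 := by
  subst hdF
  have hproj : IsNearestPointMap F proj := ⟨hprojF, hprojdist, hprojuniq⟩
  have hgrad : ∀ x, HasGradientAt (fun x => 1 / 2 * infDist x F ^ 2) (x - proj x) x :=
    fun x => hasGradientAt_half_sq_infDist (hprojF x) (hprojdist x) (hdiff x)
  rw [gradient_eq hgrad] at hlip
  have hcont : Continuous proj := by
    have hgrad_cont := (LocallyLipschitz.of_forall_isCompact hlip).continuous
    refine (continuous_id.sub hgrad_cont).congr ?_
    simp
  have hray := hproj.proj_add_smul_sub_eq hcont fun z =>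
    have ⟨_, hL⟩ := hlip _ (isCompact_closedBall z 1)
    hproj.exists_one_lt_forall_proj_add_smul_sub_eq hgrad hL
  refine fun x => ⟨fun s hs => hray x hs,
    fun y hy => inner_sub_nonpos_of_forall_dist_le fun s hs => ?_⟩
  have hnearest := hproj.dist_eq (proj x + s • (x - proj x))
  rw [hray x hs] at hnearest
  exact hnearest ▸ infDist_le_dist_of_mem hy

/-- If `d_F = (1/2)·dist(·, F)²` is differentiable with locally
Lipschitz gradient (so that the nearest-point projection `proj_F` is single-valued),
then for every `x`, with `x_∞ = proj_F(x)`, one has `proj_F(x_∞ + s(x − x_∞)) = x_∞`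
for all `s ≥ 0`, and consequently `⟨x − x_∞, y − x_∞⟩ ≤ 0` for every `y ∈ F`. -/
theorem proj_along_ray_and_separation (n : ℕ) (F : Set (EuclideanSpace ℝ (Fin n)))
    (hne : F.Nonempty) (hcl : IsClosed F)
    (dF : EuclideanSpace ℝ (Fin n) → ℝ)
    (hdF : dF = fun x => (1 / 2) * Metric.infDist x F ^ 2)
    (hdiff : Differentiable ℝ dF)
    (hlip : ∀ K : Set (EuclideanSpace ℝ (Fin n)), IsCompact K →
      ∃ L : NNReal, LipschitzOnWith L (gradient dF) K)
    (proj : EuclideanSpace ℝ (Fin n) → EuclideanSpace ℝ (Fin n))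
    (hprojF : ∀ x, proj x ∈ F)
    (hprojdist : ∀ x, dist x (proj x) = Metric.infDist x F)
    (hprojuniq : ∀ x y, y ∈ F → dist x y = Metric.infDist x F → y = proj x) :
    ∀ x, (∀ s : ℝ, 0 ≤ s → proj (proj x + s • (x - proj x)) = proj x) ∧
      ∀ y ∈ F, ⟪x - proj x, y - proj x⟫ ≤ 0 :=
  proj_along_ray_and_separation_general n F dF hdF hdiff hlip proj hprojF hprojdist hprojuniq
end
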